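/- arXiv:1207.6630 — 5 statements merged into one kernel-verified Lean document; each statement's English description precedes it below -/
import Mathlib

section
/- Output burstiness bound: if D(0,t) ≥ inf_{0≤u≤t} A(0,u)·S(u,t) for all t, D(0,t) ≤ A(0,t), and D(τ,t) = D(0,t)/D(0,τ) (all processes strictly positive), then for all 0 ≤ τ ≤ t, D(τ,t) ≤ sup_{0≤u≤τ} A(u,t)/S(u,τ), where A(u,t) = A(0,t)/A(0,u). -/
/-!
In discrete time the infimum in the server bound at time `τ` is attained at some `u ≤ τ`, so
`D(τ,t) = D(0,t)/D(0,τ) ≤ A(0,t)/(A(0,u) S(u,τ))`, which is one of the terms of the supremum.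
-/

section FiniteInterval

variable {α : Type*} [ConditionallyCompleteLinearOrder α]

theorem exists_mem_Icc_csInf_image_eq (f : ℕ → α) {a b : ℕ} (hab : a ≤ b) :
    ∃ u ∈ Set.Icc a b, f u = sInf (f '' Set.Icc a b) :=
  ((Set.nonempty_Icc.2 hab).image f).csInf_mem ((Set.finite_Icc a b).image f)

theorem le_csSup_image_Icc (f : ℕ → α) {a b u : ℕ} (hu : u ∈ Set.Icc a b) :
    f u ≤ sSup (f '' Set.Icc a b) :=
  le_csSup ((Set.finite_Icc a b).image f).bddAbove ⟨u, hu, rfl⟩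

end FiniteInterval

theorem snr_output_bound_general (A D S : ℕ → ℕ → ℝ)
    (hA : ∀ τ t, 0 < A τ t) (hS : ∀ τ t, 0 < S τ t)
    (hserver : ∀ t, D 0 t ≥ sInf ((fun u => A 0 u * S u t) '' Set.Icc 0 t))
    (hcaus : ∀ t, D 0 t ≤ A 0 t)
    (hDmul : ∀ τ t, D τ t = D 0 t / D 0 τ) :
    ∀ τ t : ℕ, τ ≤ t →
      D τ t ≤ sSup ((fun u => (A 0 t / A 0 u) / S u τ) '' Set.Icc 0 τ) := by
  intro τ t _
  obtain ⟨u, hu, hmin⟩ := exists_mem_Icc_csInf_image_eq (fun u => A 0 u * S u τ) τ.zero_le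
  have hserver_u : A 0 u * S u τ ≤ D 0 τ := hmin ▸ hserver τ
  calc D τ t = D 0 t / D 0 τ := hDmul τ t
    _ ≤ A 0 t / (A 0 u * S u τ) :=
      div_le_div₀ (hA 0 t).le (hcaus t) (mul_pos (hA 0 u) (hS u τ)) hserver_u
    _ = A 0 t / A 0 u / S u τ := (div_div _ _ _).symm
    _ ≤ _ := le_csSup_image_Icc (fun u => A 0 t / A 0 u / S u τ) hu

/-- Output burstiness bound: the SNR departure process is bounded by the
(min,×) deconvolution of arrivals and service. -/
theorem snr_output_bound (A D S : ℕ → ℕ → ℝ)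
    (hA : ∀ τ t, 0 < A τ t) (hD : ∀ τ t, 0 < D τ t) (hS : ∀ τ t, 0 < S τ t)
    (hserver : ∀ t, D 0 t ≥ sInf ((fun u => A 0 u * S u t) '' Set.Icc 0 t))
    (hcaus : ∀ t, D 0 t ≤ A 0 t)
    (hDmul : ∀ τ t, D τ t = D 0 t / D 0 τ) :
    ∀ τ t : ℕ, τ ≤ t →
      D τ t ≤ sSup ((fun u => (A 0 t / A 0 u) / S u τ) '' Set.Icc 0 τ) :=
  snr_output_bound_general A D S hA hS hserver hcaus hDmul
end

section
/- Mellin bound of the (min,×) convolution: let X(τ,t), Y(τ,t) be independent nonnegative bivariate random processes and s < 1. Then E[((X ⊗ Y)(τ,t))^{s-1}] ≤ Σ_{u=τ}^{t} E[(X(τ,u))^{s-1}]·E[(Y(u,t))^{s-1}], where (X ⊗ Y)(τ,t) = inf_{τ≤u≤t} X(τ,u)Y(u,t). -/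
open MeasureTheory ProbabilityTheory

/-!
On a finite window the infimum defining `(X ⊗ Y)(τ, t)` is attained at some `u`, so its
Mellin integrand is one of the nonnegative summands `(X(τ, u) Y(u, t))^{s-1}`. Integrating,
the Mellin transform of the convolution is at most the sum of the Mellin transforms of the
products, and each of these factors by independence.
-/

theorem Finset.apply_inf'_le_sum {ι α M : Type*} [LinearOrder α] [AddCommMonoid M]
    [PartialOrder M] [IsOrderedAddMonoid M] {s : Finset ι} (hs : s.Nonempty) (f : ι → α)
    (g : α → M) (hg : ∀ i ∈ s, 0 ≤ g (f i)) :
    g (s.inf' hs f) ≤ ∑ i ∈ s, g (f i) := by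
  obtain ⟨i, hi, hmin⟩ := s.exists_mem_eq_inf' hs f
  rw [hmin]
  exact Finset.single_le_sum hg hi

theorem lintegral_ofReal_mul_rpow_of_indepFun {Ω : Type*} [MeasurableSpace Ω] {μ : Measure Ω}
    {X Y : Ω → ℝ} (hX : AEMeasurable X μ) (hY : AEMeasurable Y μ)
    (hX₀ : ∀ ω, 0 ≤ X ω) (hY₀ : ∀ ω, 0 ≤ Y ω) (hXY : IndepFun X Y μ) (p : ℝ) :
    ∫⁻ ω, ENNReal.ofReal ((X ω * Y ω) ^ p) ∂μ
      = (∫⁻ ω, ENNReal.ofReal (X ω ^ p) ∂μ) * ∫⁻ ω, ENNReal.ofReal (Y ω ^ p) ∂μ := by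
  have hφ : Measurable fun x : ℝ => ENNReal.ofReal (x ^ p) :=
    ENNReal.measurable_ofReal.comp (measurable_id.pow_const p)
  calc _ = ∫⁻ ω, ENNReal.ofReal (X ω ^ p) * ENNReal.ofReal (Y ω ^ p) ∂μ :=
        lintegral_congr fun ω => by
          rw [Real.mul_rpow (hX₀ ω) (hY₀ ω), ENNReal.ofReal_mul (Real.rpow_nonneg (hX₀ ω) p)]
    _ = _ := lintegral_mul_eq_lintegral_mul_lintegral_of_indepFun'' (hφ.comp_aemeasurable hX)
        (hφ.comp_aemeasurable hY) (hXY.comp hφ hφ)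

/-- Mellin bound of the (min,×) convolution: for independent positive bivariate
processes X, Y and s < 1,
E[((X ⊗ Y)(τ,t))^{s-1}] ≤ Σ_{u=τ}^{t} E[X(τ,u)^{s-1}]·E[Y(u,t)^{s-1}]. -/
theorem mellin_minTimesConv_bound {Ω : Type*} [MeasurableSpace Ω] (μ : Measure Ω)
    (X Y : ℕ → ℕ → Ω → ℝ) (s : ℝ)
    (τ t : ℕ) (hτt : τ ≤ t)
    (hXpos : ∀ τ' t' ω, 0 < X τ' t' ω) (hYpos : ∀ τ' t' ω, 0 < Y τ' t' ω)
    (hXm : ∀ τ' t', Measurable (X τ' t')) (hYm : ∀ τ' t', Measurable (Y τ' t'))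
    (hind : ∀ u, IndepFun (X τ u) (Y u t) μ) :
    ∫⁻ ω, ENNReal.ofReal
        ((Finset.inf' (Finset.Icc τ t) ⟨τ, by simp [hτt]⟩
          fun u => X τ u ω * Y u t ω) ^ (s - 1)) ∂μ
      ≤ ∑ u ∈ Finset.Icc τ t,
          (∫⁻ ω, ENNReal.ofReal (X τ u ω ^ (s - 1)) ∂μ) *
            ∫⁻ ω, ENNReal.ofReal (Y u t ω ^ (s - 1)) ∂μ := by
  calc _ ≤ ∫⁻ ω, ∑ u ∈ Finset.Icc τ t, ENNReal.ofReal ((X τ u ω * Y u t ω) ^ (s - 1)) ∂μ :=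
        lintegral_mono fun ω => Finset.apply_inf'_le_sum _ _
          (fun x => ENNReal.ofReal (x ^ (s - 1))) fun _ _ => zero_le
    _ = ∑ u ∈ Finset.Icc τ t, ∫⁻ ω, ENNReal.ofReal ((X τ u ω * Y u t ω) ^ (s - 1)) ∂μ :=
        lintegral_finsetSum _ fun u _ =>
          ENNReal.measurable_ofReal.comp (((hXm τ u).mul (hYm u t)).pow_const _)
    _ = _ := Finset.sum_congr rfl fun u _ =>
        lintegral_ofReal_mul_rpow_of_indepFun (hXm τ u).aemeasurable (hYm u t).aemeasurable
          (fun ω => (hXpos τ u ω).le) (fun ω => (hYpos u t ω).le) (hind u) _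
end

section
/- Mellin bound of the (min,×) deconvolution: let X(τ,t), Y(τ,t) be independent strictly positive bivariate random processes and s > 1. Then E[((X ⊘ Y)(τ,t))^{s-1}] ≤ Σ_{u=0}^{τ} E[(X(u,t))^{s-1}]·E[(Y(u,τ))^{1-s}], where (X ⊘ Y)(τ,t) = sup_{0≤u≤τ} X(u,t)/Y(u,τ). -/
open MeasureTheory ProbabilityTheory

/-!
The supremum over the finite range `0 ≤ u ≤ τ` is attained, so its `(s - 1)`-th power is one of
the terms `(X(u,t) / Y(u,τ))^(s-1) = X(u,t)^(s-1) · Y(u,τ)^(1-s)` and hence at most their sum (a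
union bound). Integrating, each summand factors by the independence of `X(u,t)` and `Y(u,τ)`.
-/

theorem Finset.apply_sup'_le_sum {ι α M : Type*} [LinearOrder α] [AddCommMonoid M]
    [PartialOrder M] [IsOrderedAddMonoid M] [CanonicallyOrderedAdd M]
    (s : Finset ι) (hs : s.Nonempty) (f : ι → α) (g : α → M) :
    g (s.sup' hs f) ≤ ∑ i ∈ s, g (f i) := by
  obtain ⟨i, hi, hsup⟩ := s.exists_mem_eq_sup' hs f
  rw [hsup]
  exact single_le_sum (f := fun j => g (f j)) (fun _ _ => zero_le) hi

theorem ENNReal.ofReal_div_rpow {x y : ℝ} (hx : 0 ≤ x) (hy : 0 ≤ y) (r : ℝ) :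
    ENNReal.ofReal ((x / y) ^ r) = ENNReal.ofReal (x ^ r) * ENNReal.ofReal (y ^ (-r)) := by
  rw [Real.div_rpow hx hy, div_eq_mul_inv, ← Real.rpow_neg hy,
    ENNReal.ofReal_mul (Real.rpow_nonneg hx _)]

theorem ProbabilityTheory.IndepFun.lintegral_comp_mul_comp {Ω β γ : Type*} [MeasurableSpace Ω]
    [MeasurableSpace β] [MeasurableSpace γ] {μ : Measure Ω} {X : Ω → β} {Y : Ω → γ}
    (h : IndepFun X Y μ) (hX : Measurable X) (hY : Measurable Y) {g : β → ENNReal}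
    {k : γ → ENNReal} (hg : Measurable g) (hk : Measurable k) :
    ∫⁻ ω, g (X ω) * k (Y ω) ∂μ = (∫⁻ ω, g (X ω) ∂μ) * ∫⁻ ω, k (Y ω) ∂μ :=
  lintegral_mul_eq_lintegral_mul_lintegral_of_indepFun'' (hg.comp hX).aemeasurable
    (hk.comp hY).aemeasurable (h.comp hg hk)

/-- Mellin bound of the (min,×) deconvolution: for independent strictly positive
bivariate processes X, Y and s > 1,
E[((X ⊘ Y)(τ,t))^{s-1}] ≤ Σ_{u=0}^{τ} E[X(u,t)^{s-1}]·E[Y(u,τ)^{1-s}]. -/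
theorem mellin_minTimesDeconv_bound {Ω : Type*} [MeasurableSpace Ω] (μ : Measure Ω)
    (X Y : ℕ → ℕ → Ω → ℝ) (s : ℝ) (τ t : ℕ)
    (hXpos : ∀ τ' t' ω, 0 < X τ' t' ω) (hYpos : ∀ τ' t' ω, 0 < Y τ' t' ω)
    (hXm : ∀ τ' t', Measurable (X τ' t')) (hYm : ∀ τ' t', Measurable (Y τ' t'))
    (hind : ∀ u, IndepFun (X u t) (Y u τ) μ) :
    ∫⁻ ω, ENNReal.ofReal
        ((Finset.sup' (Finset.Icc 0 τ) ⟨0, by simp⟩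
          fun u => X u t ω / Y u τ ω) ^ (s - 1)) ∂μ
      ≤ ∑ u ∈ Finset.Icc 0 τ,
          (∫⁻ ω, ENNReal.ofReal (X u t ω ^ (s - 1)) ∂μ) *
            ∫⁻ ω, ENNReal.ofReal (Y u τ ω ^ (1 - s)) ∂μ := by
  have hpower_meas : ∀ r : ℝ, Measurable fun x : ℝ => ENNReal.ofReal (x ^ r) := by
    intro r; fun_prop
  calc _ ≤ ∫⁻ ω, ∑ u ∈ Finset.Icc 0 τ,
          ENNReal.ofReal (X u t ω ^ (s - 1)) * ENNReal.ofReal (Y u τ ω ^ (1 - s)) ∂μ := by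
        refine lintegral_mono fun ω => (Finset.apply_sup'_le_sum _ _ _
          fun r => ENNReal.ofReal (r ^ (s - 1))).trans_eq (Finset.sum_congr rfl fun u _ => ?_)
        rw [ENNReal.ofReal_div_rpow (hXpos u t ω).le (hYpos u τ ω).le, neg_sub]
    _ = ∑ u ∈ Finset.Icc 0 τ, ∫⁻ ω,
          ENNReal.ofReal (X u t ω ^ (s - 1)) * ENNReal.ofReal (Y u τ ω ^ (1 - s)) ∂μ :=
        lintegral_finsetSum _ fun u _ =>
          ((hpower_meas _).comp (hXm u t)).mul ((hpower_meas _).comp (hYm u τ))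
    _ = _ := Finset.sum_congr rfl fun u _ =>
        (hind u).lintegral_comp_mul_comp (hXm u t) (hYm u τ) (hpower_meas _) (hpower_meas _)
end

section
/- Cascade Mellin bound: for N i.i.d. fading channels with service S_n(τ,t) = Π_{i=τ}^{t-1} g(γ_i^{(n)}) where all g(γ_i^{(n)}) are i.i.d. positive random variables, the network service S_net = S₁ ⊗ ⋯ ⊗ S_N satisfies, for s < 1, E[(S_net(τ,t))^{s-1}] ≤ C(N-1+t-τ, t-τ) · (E[g(γ)^{s-1}])^{t-τ}, where C(n,k) denotes the binomial coefficient. -/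
/-!
The minimum defining the (min,×) convolution is attained at some `u ∈ [τ, t]`, and `x ↦ x ^ (s - 1)`
is multiplicative on nonnegative reals, so `(S ⊗ T)(τ,t) ^ (s-1)` is bounded by the sum over `u` of
`S(τ,u) ^ (s-1) · T(u,t) ^ (s-1)`. The first channel is independent of the rest of the cascade, so
each summand has expectation the product of the two expectations; the first factor is
`E[g ^ (s-1)] ^ (u - τ)` by independence of the slots, the second is bounded by induction on the
number of channels, and the hockey-stick identity sums the binomial coefficients.
-/

open MeasureTheory ProbabilityTheory

/-- The (min,×) convolution of ω-indexed bivariate processes. -/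
noncomputable def convP {Ω : Type*} (X Y : ℕ → ℕ → Ω → ℝ) : ℕ → ℕ → Ω → ℝ :=
  fun τ t ω => sInf ((fun u => X τ u ω * Y u t ω) '' Set.Icc τ t)

/-- The (min,×) convolution of a cascade of n+1 service processes:
S₀ ⊗ S₁ ⊗ ⋯ ⊗ Sₙ. -/
noncomputable def cascade {Ω : Type*} :
    (n : ℕ) → (Fin (n + 1) → ℕ → ℕ → Ω → ℝ) → ℕ → ℕ → Ω → ℝ
  | 0, S => S 0
  | n + 1, S => convP (S 0) (cascade n fun i => S i.succ)

open scoped ENNReal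

def productService {Ω : Type*} (g : ℕ → Ω → ℝ) : ℕ → ℕ → Ω → ℝ :=
  fun τ t ω => ∏ i ∈ Finset.Ico τ t, g i ω

theorem Nat.sum_Icc_choose_add_tsub (N : ℕ) {τ t : ℕ} (h : τ ≤ t) :
    ∑ u ∈ Finset.Icc τ t, (N + (t - u)).choose (t - u) = (N + 1 + (t - τ)).choose (t - τ) := by
  have hreflect := Finset.sum_Ico_reflect (fun k => (N + k).choose k) τ (le_refl (t + 1))
  rw [Nat.sub_self, Nat.Ico_zero_eq_range, show t + 1 - τ = t - τ + 1 by omega,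
    Finset.Ico_add_one_right_eq_Icc] at hreflect
  rw [hreflect]
  have hsymm (k : ℕ) : (N + k).choose k = (k + N).choose N := by
    rw [Nat.add_comm N k]
    exact Nat.choose_symm_add
  simp only [hsymm]
  rw [Nat.sum_range_add_choose, show t - τ + N + 1 = N + 1 + (t - τ) by omega]
  exact Nat.choose_symm_add

section Independence

variable {ι Ω β γ δ : Type*} [mβ : MeasurableSpace β]

theorem measurable_iSup_comap_of_mem (f : ι → Ω → β) {S : Set ι} {i : ι} (hi : i ∈ S) :
    Measurable[⨆ j ∈ S, mβ.comap (f j)] (f i) :=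
  Measurable.of_comap_le (le_iSup₂ (f := fun j (_ : j ∈ S) => mβ.comap (f j)) i hi)

variable [MeasurableSpace Ω] {μ : Measure Ω} [MeasurableSpace γ] [MeasurableSpace δ]

theorem ProbabilityTheory.iIndepFun.indepFun_of_measurable_iSup {f : ι → Ω → β}
    (hf : iIndepFun f μ) (hmeas : ∀ i, Measurable (f i)) {S T : Set ι} (hST : Disjoint S T)
    {F : Ω → γ} {H : Ω → δ} (hF : Measurable[⨆ i ∈ S, mβ.comap (f i)] F)
    (hH : Measurable[⨆ i ∈ T, mβ.comap (f i)] H) : IndepFun F H μ := by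
  rw [IndepFun_iff_Indep]
  exact indep_of_indep_of_le_right
    (indep_of_indep_of_le_left (indep_iSup_of_disjoint (fun i => (hmeas i).comap_le) hf.iIndep hST)
      hF.comap_le) hH.comap_le

end Independence

section Convolution

variable {Ω : Type*} {X Y : ℕ → ℕ → Ω → ℝ}

theorem convP_eq_inf' {τ t : ℕ} (h : τ ≤ t) (ω : Ω) :
    convP X Y τ t ω
      = (Finset.Icc τ t).inf' (Finset.nonempty_Icc.2 h) fun u => X τ u ω * Y u t ω := by
  rw [convP, Finset.inf'_eq_csInf_image, Finset.coe_Icc]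

theorem convP_nonneg (hX : ∀ a b ω, 0 ≤ X a b ω) (hY : ∀ a b ω, 0 ≤ Y a b ω) (τ t : ℕ) (ω : Ω) :
    0 ≤ convP X Y τ t ω :=
  Real.sInf_nonneg (by rintro _ ⟨u, -, rfl⟩; exact mul_nonneg (hX _ _ _) (hY _ _ _))

theorem measurable_convP {m : MeasurableSpace Ω} (hX : ∀ a b, Measurable (X a b))
    (hY : ∀ a b, Measurable (Y a b)) (τ t : ℕ) : Measurable (convP X Y τ t) := by
  by_cases h : τ ≤ t
  · have hinf : convP X Y τ t = (Finset.Icc τ t).inf' (Finset.nonempty_Icc.2 h)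
        fun u => X τ u * Y u t := by
      funext ω
      rw [convP_eq_inf' h, Finset.inf'_apply]
      rfl
    rw [hinf]
    exact Finset.inf'_induction _ _ (fun _ hf _ hg => hf.inf hg)
      fun u _ => (hX τ u).mul (hY u t)
  · have hempty : convP X Y τ t = fun _ => 0 := by
      funext ω
      rw [convP, Set.Icc_eq_empty h, Set.image_empty, Real.sInf_empty]
    rw [hempty]
    exact measurable_const

theorem ofReal_rpow_convP_le_sum (hX : ∀ a b ω, 0 ≤ X a b ω) (hY : ∀ a b ω, 0 ≤ Y a b ω)
    (r : ℝ) {τ t : ℕ} (h : τ ≤ t) (ω : Ω) :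
    ENNReal.ofReal (convP X Y τ t ω ^ r)
      ≤ ∑ u ∈ Finset.Icc τ t, ENNReal.ofReal (X τ u ω ^ r) * ENNReal.ofReal (Y u t ω ^ r) := by
  obtain ⟨u, hu, hmin⟩ :=
    Finset.exists_mem_eq_inf' (Finset.nonempty_Icc.2 h) fun u => X τ u ω * Y u t ω
  rw [convP_eq_inf' h, hmin,
    Real.mul_rpow (hX _ _ _) (hY _ _ _), ENNReal.ofReal_mul (Real.rpow_nonneg (hX _ _ _) _)]
  exact Finset.single_le_sum (f := fun u => ENNReal.ofReal (X τ u ω ^ r) * _)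
    (fun _ _ => zero_le) hu

theorem lintegral_ofReal_rpow_convP_le [MeasurableSpace Ω] {μ : Measure Ω}
    (hX : ∀ a b ω, 0 ≤ X a b ω) (hY : ∀ a b ω, 0 ≤ Y a b ω)
    (hXm : ∀ a b, Measurable (X a b)) (hYm : ∀ a b, Measurable (Y a b)) (r : ℝ) {τ t : ℕ}
    (hXY : ∀ u, IndepFun (X τ u) (Y u t) μ) (h : τ ≤ t) :
    ∫⁻ ω, ENNReal.ofReal (convP X Y τ t ω ^ r) ∂μ
      ≤ ∑ u ∈ Finset.Icc τ t, (∫⁻ ω, ENNReal.ofReal (X τ u ω ^ r) ∂μ)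
          * ∫⁻ ω, ENNReal.ofReal (Y u t ω ^ r) ∂μ := by
  have hφ : Measurable fun x : ℝ => ENNReal.ofReal (x ^ r) := by fun_prop
  have hA (u : ℕ) : Measurable fun ω => ENNReal.ofReal (X τ u ω ^ r) := hφ.comp (hXm τ u)
  have hB (u : ℕ) : Measurable fun ω => ENNReal.ofReal (Y u t ω ^ r) := hφ.comp (hYm u t)
  calc ∫⁻ ω, ENNReal.ofReal (convP X Y τ t ω ^ r) ∂μ
      ≤ ∫⁻ ω, ∑ u ∈ Finset.Icc τ t,
          ENNReal.ofReal (X τ u ω ^ r) * ENNReal.ofReal (Y u t ω ^ r) ∂μ :=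
        lintegral_mono (ofReal_rpow_convP_le_sum hX hY r h)
    _ = _ := by
        rw [lintegral_finsetSum _ fun u _ => by fun_prop]
        exact Finset.sum_congr rfl fun u _ =>
          lintegral_mul_eq_lintegral_mul_lintegral_of_indepFun'' (hA u).aemeasurable
            (hB u).aemeasurable ((hXY u).comp hφ hφ)

end Convolution

section Cascade

variable {Ω : Type*}

theorem cascade_nonneg : ∀ (N : ℕ) (S : Fin (N + 1) → ℕ → ℕ → Ω → ℝ),
    (∀ n a b ω, 0 ≤ S n a b ω) → ∀ τ t ω, 0 ≤ cascade N S τ t ω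
  | 0, _, hS, _, _, _ => hS 0 _ _ _
  | N + 1, _, hS, τ, t, ω =>
      convP_nonneg (hS 0) (cascade_nonneg N _ fun n => hS n.succ) τ t ω

theorem measurable_cascade {m : MeasurableSpace Ω} : ∀ (N : ℕ) (S : Fin (N + 1) → ℕ → ℕ → Ω → ℝ),
    (∀ n a b, Measurable (S n a b)) → ∀ τ t, Measurable (cascade N S τ t)
  | 0, _, hS, _, _ => hS 0 _ _
  | N + 1, _, hS, τ, t =>
      measurable_convP (hS 0) (measurable_cascade N _ fun n => hS n.succ) τ t

end Cascade

section ProductService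

variable {Ω : Type*} {g : ℕ → Ω → ℝ}

theorem productService_nonneg (hg : ∀ i ω, 0 ≤ g i ω) (τ t : ℕ) (ω : Ω) :
    0 ≤ productService g τ t ω :=
  Finset.prod_nonneg fun i _ => hg i ω

theorem measurable_productService {m : MeasurableSpace Ω} (hg : ∀ i, Measurable (g i))
    (τ t : ℕ) : Measurable (productService g τ t) :=
  Finset.measurable_prod _ fun i _ => hg i

theorem lintegral_ofReal_rpow_productService [MeasurableSpace Ω] {μ : Measure Ω} {g₀ : Ω → ℝ}
    (hg : ∀ i ω, 0 ≤ g i ω) (hmeas : ∀ i, Measurable (g i))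
    (hid : ∀ i, IdentDistrib (g i) g₀ μ μ) (hind : iIndepFun g μ) (r : ℝ) (τ t : ℕ) :
    ∫⁻ ω, ENNReal.ofReal (productService g τ t ω ^ r) ∂μ
      = (∫⁻ ω, ENNReal.ofReal (g₀ ω ^ r) ∂μ) ^ (t - τ) := by
  have hφ : Measurable fun x : ℝ => ENNReal.ofReal (x ^ r) := by fun_prop
  have hsame (i : ℕ) : ∫⁻ ω, ENNReal.ofReal (g i ω ^ r) ∂μ = ∫⁻ ω, ENNReal.ofReal (g₀ ω ^ r) ∂μ :=
    ((hid i).comp hφ).lintegral_eq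
  calc ∫⁻ ω, ENNReal.ofReal (productService g τ t ω ^ r) ∂μ
      = ∫⁻ ω, ∏ i ∈ Finset.Ico τ t, ENNReal.ofReal (g i ω ^ r) ∂μ := by
        refine lintegral_congr fun ω => ?_
        rw [productService, ← Real.finsetProd_rpow _ _ fun i _ => hg i ω,
          ENNReal.ofReal_prod_of_nonneg fun i _ => Real.rpow_nonneg (hg i ω) _]
    _ = ∏ i ∈ Finset.Ico τ t, ∫⁻ ω, ENNReal.ofReal (g i ω ^ r) ∂μ :=
        lintegral_prod_eq_prod_lintegral_of_indepFun _ _ (hind.comp _ fun _ => hφ)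
          fun i => hφ.comp (hmeas i)
    _ = (∫⁻ ω, ENNReal.ofReal (g₀ ω ^ r) ∂μ) ^ (t - τ) := by
        rw [Finset.prod_congr rfl fun i _ => hsame i, Finset.prod_const, Nat.card_Ico]

end ProductService

section MellinBound

variable {Ω : Type*} [MeasurableSpace Ω] {μ : Measure Ω}

theorem indepFun_productService_cascade_tail {N : ℕ} {G : Fin (N + 2) → ℕ → Ω → ℝ}
    (hmeas : ∀ n i, Measurable (G n i))
    (hind : iIndepFun (fun p : Fin (N + 2) × ℕ => G p.1 p.2) μ) (τ u t : ℕ) :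
    IndepFun (productService (G 0) τ u)
      (cascade N (fun n => productService (G n.succ)) u t) μ := by
  refine hind.indepFun_of_measurable_iSup (fun p => hmeas p.1 p.2)
    (S := {p | p.1 = 0}) (T := {p | p.1 ≠ 0}) (Set.disjoint_left.2 fun _ h0 hne => hne h0) ?_ ?_
  · exact measurable_productService
      (fun i => measurable_iSup_comap_of_mem (fun p : Fin (N + 2) × ℕ => G p.1 p.2)
        (i := (0, i)) rfl) τ u
  · exact measurable_cascade N _
      (fun n => measurable_productService fun i =>
        measurable_iSup_comap_of_mem (fun p : Fin (N + 2) × ℕ => G p.1 p.2)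
          (i := (n.succ, i)) (Fin.succ_ne_zero n)) u t

theorem lintegral_ofReal_rpow_cascade_le (N : ℕ) (G : Fin (N + 1) → ℕ → Ω → ℝ)
    (hG : ∀ n i ω, 0 ≤ G n i ω) (hmeas : ∀ n i, Measurable (G n i))
    (hind : iIndepFun (fun p : Fin (N + 1) × ℕ => G p.1 p.2) μ) {r : ℝ} {M : ℝ≥0∞}
    (hM : ∀ n τ t, ∫⁻ ω, ENNReal.ofReal (productService (G n) τ t ω ^ r) ∂μ = M ^ (t - τ))
    {τ t : ℕ} (h : τ ≤ t) :
    ∫⁻ ω, ENNReal.ofReal (cascade N (fun n => productService (G n)) τ t ω ^ r) ∂μ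
      ≤ (N + (t - τ)).choose (t - τ) * M ^ (t - τ) := by
  induction N generalizing τ with
  | zero => simp [cascade, hM]
  | succ N ih =>
    have htail (u : ℕ) (hu : u ≤ t) := ih (fun n => G n.succ) (fun n => hG n.succ)
      (fun n => hmeas n.succ) (hind.precomp ((Fin.succ_injective _).prodMap Function.injective_id))
      (fun n => hM n.succ) hu
    calc ∫⁻ ω, ENNReal.ofReal (cascade (N + 1) (fun n => productService (G n)) τ t ω ^ r) ∂μ
        ≤ ∑ u ∈ Finset.Icc τ t, M ^ (u - τ) * ((N + (t - u)).choose (t - u) * M ^ (t - u)) := by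
          refine (lintegral_ofReal_rpow_convP_le (productService_nonneg (hG 0))
            (cascade_nonneg N _ fun n => productService_nonneg (hG n.succ))
            (measurable_productService (hmeas 0))
            (measurable_cascade N _ fun n => measurable_productService (hmeas n.succ)) r
            (fun u => indepFun_productService_cascade_tail hmeas hind τ u t) h).trans ?_
          refine Finset.sum_le_sum fun u hu => ?_
          rw [hM 0 τ u]
          exact mul_le_mul_right (htail u (Finset.mem_Icc.1 hu).2) _
      _ = ∑ u ∈ Finset.Icc τ t, ((N + (t - u)).choose (t - u) : ℝ≥0∞) * M ^ (t - τ) := by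
          refine Finset.sum_congr rfl fun u hu => ?_
          rw [mul_left_comm, ← pow_add, show u - τ + (t - u) = t - τ by
            have := Finset.mem_Icc.1 hu; omega]
      _ = (N + 1 + (t - τ)).choose (t - τ) * M ^ (t - τ) := by
          rw [← Finset.sum_mul, ← Nat.cast_sum, Nat.sum_Icc_choose_add_tsub N h]

end MellinBound

theorem cascade_mellin_bound_general {Ω : Type*} [MeasurableSpace Ω] (μ : Measure Ω) (N : ℕ)
    (G : Fin (N + 1) → ℕ → Ω → ℝ) (g₀ : Ω → ℝ)
    (hpos : ∀ n i ω, 0 < G n i ω)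
    (hmeas : ∀ n i, Measurable (G n i))
    (hid : ∀ n i, IdentDistrib (G n i) g₀ μ μ)
    (hind : iIndepFun
      (fun p : Fin (N + 1) × ℕ => G p.1 p.2) μ)
    (S : Fin (N + 1) → ℕ → ℕ → Ω → ℝ)
    (hS : ∀ n τ t ω, S n τ t ω = ∏ i ∈ Finset.Ico τ t, G n i ω)
    (s : ℝ) (τ t : ℕ) (hτt : τ ≤ t) :
    ∫⁻ ω, ENNReal.ofReal ((cascade N S τ t ω) ^ (s - 1)) ∂μ
      ≤ (Nat.choose (N + (t - τ)) (t - τ)) *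
          (∫⁻ ω, ENNReal.ofReal (g₀ ω ^ (s - 1)) ∂μ) ^ (t - τ) := by
  obtain rfl : S = fun n => productService (G n) := by
    funext n a b ω
    exact hS n a b ω
  have hG n i ω : 0 ≤ G n i ω := (hpos n i ω).le
  exact lintegral_ofReal_rpow_cascade_le N G hG hmeas hind
    (fun n => lintegral_ofReal_rpow_productService (hG n) (hmeas n) (hid n)
      (hind.precomp (Prod.mk_right_injective n) :) (s - 1)) hτt

/-- Cascade Mellin bound: for N+1 i.i.d. fading channels with service
S_n(τ,t) = Π_{i=τ}^{t-1} g(γ_i^{(n)}), the network service S_net = S₀ ⊗ ⋯ ⊗ S_N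
satisfies, for s < 1,
E[(S_net(τ,t))^{s-1}] ≤ C(N+t-τ, t-τ)·(E[g(γ)^{s-1}])^{t-τ}. -/
theorem cascade_mellin_bound {Ω : Type*} [MeasurableSpace Ω] (μ : Measure Ω)
    [IsProbabilityMeasure μ] (N : ℕ)
    (G : Fin (N + 1) → ℕ → Ω → ℝ) (g₀ : Ω → ℝ)
    (hpos : ∀ n i ω, 0 < G n i ω) (hg₀ : Measurable g₀)
    (hmeas : ∀ n i, Measurable (G n i))
    (hid : ∀ n i, IdentDistrib (G n i) g₀ μ μ)
    (hind : iIndepFun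
      (fun p : Fin (N + 1) × ℕ => G p.1 p.2) μ)
    (S : Fin (N + 1) → ℕ → ℕ → Ω → ℝ)
    (hS : ∀ n τ t ω, S n τ t ω = ∏ i ∈ Finset.Ico τ t, G n i ω)
    (s : ℝ) (hs : s < 1) (τ t : ℕ) (hτt : τ ≤ t) :
    ∫⁻ ω, ENNReal.ofReal ((cascade N S τ t ω) ^ (s - 1)) ∂μ
      ≤ (Nat.choose (N + (t - τ)) (t - τ)) *
          (∫⁻ ω, ENNReal.ofReal (g₀ ω ^ (s - 1)) ∂μ) ^ (t - τ) :=
  cascade_mellin_bound_general μ N G g₀ hpos hmeas hid hind S hS s τ t hτt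
end

section
/- Leftover SNR service under cross traffic: suppose D_o(0,t)·D_c(0,t) ≥ inf_{0≤u≤t} A_o(0,u)·A_c(0,u)·S(u,t) for all t, where D_c(0,t) ≤ A_c(0,t) (causality) and A_c is multiplicative: A_c(u,t) = A_c(0,t)/A_c(0,u). Then D_o(0,t) ≥ inf_{0≤u≤t} A_o(0,u)·S_o(u,t), where S_o(u,t) = S(u,t)/A_c(u,t). If moreover D_c(0,t) ≤ inf_{0≤u≤t} A_c(0,u)·S(u,t), then D_o(0,t) ≥ inf_{0≤u≤t} A_o(0,u)·max{1, S_o(u,t)}. -/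
/-! Over a finite horizon the aggregate infimum is attained at some `u`. At that `u`,
causality `D_c(0,t) ≤ A_c(0,t)` turns the server bound `A_o A_c S ≤ D_o D_c` into
`A_o(0,u) A_c(0,u) S(u,t) / A_c(0,t) ≤ D_o(0,t)`, and multiplicativity of `A_c` identifies
`A_c(0,u) / A_c(0,t)` with `1 / A_c(u,t)`. Under the extra bound `D_c(0,t) ≤ A_c(0,u) S(u,t)`,
cancelling `D_c(0,t)` in the server bound gives `A_o(0,u) ≤ D_o(0,t)` as well. -/

open Set

theorem Set.Finite.csInf_image_le_of_imp {ι α β : Type*} [ConditionallyCompleteLinearOrder α]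
    [ConditionallyCompleteLinearOrder β] {s : Set ι} (hs : s.Finite) (hne : s.Nonempty)
    {f : ι → α} {g : ι → β} {a : α} {b : β} (ha : sInf (f '' s) ≤ a)
    (himp : ∀ u ∈ s, f u ≤ a → g u ≤ b) : sInf (g '' s) ≤ b := by
  obtain ⟨u, hu, hfu⟩ := (hne.image f).csInf_mem (hs.image f)
  exact (csInf_le (hs.image g).bddBelow ⟨u, hu, rfl⟩).trans (himp u hu (hfu ▸ ha))

section PointwiseBounds

variable {ao acu act s dout dc : ℝ}

theorem leftover_bound_of_causal (hdout : 0 ≤ dout) (hact : 0 < act) (hcaus : dc ≤ act)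
    (hserver : ao * acu * s ≤ dout * dc) : ao * (acu * s / act) ≤ dout := by
  rw [mul_div_assoc', div_le_iff₀ hact, ← mul_assoc]
  exact hserver.trans (mul_le_mul_of_nonneg_left hcaus hdout)

theorem arrival_le_of_cross_bound (hao : 0 ≤ ao) (hdc : 0 < dc) (hcross : dc ≤ acu * s)
    (hserver : ao * acu * s ≤ dout * dc) : ao ≤ dout := by
  refine le_of_mul_le_mul_right ?_ hdc
  calc ao * dc ≤ ao * (acu * s) := mul_le_mul_of_nonneg_left hcross hao
    _ = ao * acu * s := (mul_assoc ..).symm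
    _ ≤ dout * dc := hserver

end PointwiseBounds

theorem div_eq_mul_div_of_eq_div {a b c d : ℝ} (hb : b ≠ 0) (hc : c ≠ 0) (h : a = c / b) :
    d / a = b * d / c := by
  rw [h]; field_simp

theorem leftover_snr_service_general (Ao Ac Do Dc S : ℕ → ℕ → ℝ)
    (hAo : ∀ τ t, 0 < Ao τ t) (hAc : ∀ τ t, 0 < Ac τ t)
    (hDo : ∀ τ t, 0 < Do τ t) (hDc : ∀ τ t, 0 < Dc τ t)
    (hAcMul : ∀ u t, Ac u t = Ac 0 t / Ac 0 u)
    (hserver : ∀ t, Do 0 t * Dc 0 t ≥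
      sInf ((fun u => Ao 0 u * Ac 0 u * S u t) '' Set.Icc 0 t))
    (hcaus : ∀ t, Dc 0 t ≤ Ac 0 t) :
    (∀ t, Do 0 t ≥
        sInf ((fun u => Ao 0 u * (S u t / Ac u t)) '' Set.Icc 0 t)) ∧
    ((∀ t, Dc 0 t ≤ sInf ((fun u => Ac 0 u * S u t) '' Set.Icc 0 t)) →
      ∀ t, Do 0 t ≥
        sInf ((fun u => Ao 0 u * max 1 (S u t / Ac u t)) '' Set.Icc 0 t)) := by
  have hSo : ∀ u t, S u t / Ac u t = Ac 0 u * S u t / Ac 0 t := fun u t =>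
    div_eq_mul_div_of_eq_div (hAc 0 u).ne' (hAc 0 t).ne' (hAcMul u t)
  have leftover : ∀ t u, Ao 0 u * Ac 0 u * S u t ≤ Do 0 t * Dc 0 t →
      Ao 0 u * (S u t / Ac u t) ≤ Do 0 t := fun t u h => by
    rw [hSo]; exact leftover_bound_of_causal (hDo 0 t).le (hAc 0 t) (hcaus t) h
  refine ⟨fun t => (finite_Icc 0 t).csInf_image_le_of_imp (nonempty_Icc.2 t.zero_le) (hserver t)
    fun u _ => leftover t u, fun hcross t => ?_⟩
  refine (finite_Icc 0 t).csInf_image_le_of_imp (nonempty_Icc.2 t.zero_le) (hserver t) fun u hu h => ?_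
  have hDcu : Dc 0 t ≤ Ac 0 u * S u t :=
    (hcross t).trans (csInf_le ((finite_Icc 0 t).image _).bddBelow ⟨u, hu, rfl⟩)
  rcases max_choice 1 (S u t / Ac u t) with hmax | hmax <;> rw [hmax]
  · exact (mul_one _).trans_le (arrival_le_of_cross_bound (hAo 0 u).le (hDc 0 t) hDcu h)
  · exact leftover t u h

/-- Leftover SNR service under cross traffic: if the channel offers a dynamic SNR
server S to the aggregate of the through flow and cross traffic, then the through
flow receives the dynamic SNR server S_o(u,t) = S(u,t)/A_c(u,t); if moreover the
cross traffic departures are upper-bounded by A_c ⊗ S, the through flow receives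
max{1, S_o}. -/
theorem leftover_snr_service (Ao Ac Do Dc S : ℕ → ℕ → ℝ)
    (hAo : ∀ τ t, 0 < Ao τ t) (hAc : ∀ τ t, 0 < Ac τ t)
    (hDo : ∀ τ t, 0 < Do τ t) (hDc : ∀ τ t, 0 < Dc τ t)
    (hSpos : ∀ τ t, 0 < S τ t)
    (hAcMul : ∀ u t, Ac u t = Ac 0 t / Ac 0 u)
    (hserver : ∀ t, Do 0 t * Dc 0 t ≥
      sInf ((fun u => Ao 0 u * Ac 0 u * S u t) '' Set.Icc 0 t))
    (hcaus : ∀ t, Dc 0 t ≤ Ac 0 t) :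
    (∀ t, Do 0 t ≥
        sInf ((fun u => Ao 0 u * (S u t / Ac u t)) '' Set.Icc 0 t)) ∧
    ((∀ t, Dc 0 t ≤ sInf ((fun u => Ac 0 u * S u t) '' Set.Icc 0 t)) →
      ∀ t, Do 0 t ≥
        sInf ((fun u => Ao 0 u * max 1 (S u t / Ac u t)) '' Set.Icc 0 t)) :=
  leftover_snr_service_general Ao Ac Do Dc S hAo hAc hDo hDc hAcMul hserver hcaus
end
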